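/- Define T_one : [0, 1] → ℝ by T_one(t) = Φ̃(0) − inf_{u ∈ ℝ} ( ((1 − t)/2) · Φ̃(−u) + ((1 + t)/2) · Φ̃(u) ). Then T_one(t) ≥ t for all t ∈ [0, 1], and T_one(0) = 0. -/

import Mathlib

/-- The one-sided linear-core surrogate `Φ̃`. -/
noncomputable def tildePhi (Φ : ℝ → ℝ) (u : ℝ) : ℝ :=
  if 1 < u then Φ (1 - u) / deriv Φ 0
  else -u + 1 + Φ 0 / deriv Φ 0

/-- The transformation for one-sided smoothing:
`T_one(t) = Φ̃(0) - inf_u ((1-t)/2 · Φ̃(-u) + (1+t)/2 · Φ̃(u))`. -/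
noncomputable def Tone (Φ : ℝ → ℝ) (t : ℝ) : ℝ :=
  tildePhi Φ 0 - ⨅ u : ℝ, ((1 - t) / 2 * tildePhi Φ (-u) + (1 + t) / 2 * tildePhi Φ u)

/-! `Φ̃` lies above its linear core `u ↦ 1 - u + Φ(0)/Φ'(0)`, because a convex function lies
above its tangent line at `0`; so `(Φ̃(-u) + Φ̃(u))/2 ≥ Φ̃(0)` and the infimum defining
`T_one(0)` is attained at `u = 0`. For `T_one(t) ≥ t` it suffices to evaluate the objective at
`u = 1`, where it equals `Φ̃(0) - t`. -/

theorem ConvexOn.add_deriv_mul_sub_le {S : Set ℝ} {f : ℝ → ℝ} {x y : ℝ} (hf : ConvexOn ℝ S f)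
    (hx : x ∈ S) (hy : y ∈ S) (hfx : DifferentiableAt ℝ f x) :
    f x + deriv f x * (y - x) ≤ f y := by
  rcases lt_trichotomy y x with hyx | rfl | hxy
  · have h := hf.slope_le_deriv hy hx hyx hfx
    rw [slope_def_field, div_le_iff₀ (by linarith)] at h
    linarith
  · simp
  · have h := hf.deriv_le_slope hx hy hxy hfx
    rw [slope_def_field, le_div_iff₀ (by linarith)] at h
    linarith

section tildePhi

variable {Φ : ℝ → ℝ}

theorem tildePhi_of_le_one {u : ℝ} (hu : u ≤ 1) :
    tildePhi Φ u = -u + 1 + Φ 0 / deriv Φ 0 :=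
  if_neg hu.not_gt

theorem tildePhi_nonneg (hnn : ∀ u, 0 ≤ Φ u) (hd0 : 0 ≤ deriv Φ 0) (u : ℝ) :
    0 ≤ tildePhi Φ u := by
  have hc : 0 ≤ Φ 0 / deriv Φ 0 := div_nonneg (hnn 0) hd0
  unfold tildePhi
  split_ifs with hu
  · exact div_nonneg (hnn _) hd0
  · linarith

theorem linearCore_le_tildePhi (hconv : ConvexOn ℝ Set.univ Φ)
    (hdiff : DifferentiableAt ℝ Φ 0) (hd0 : 0 < deriv Φ 0) (u : ℝ) :
    -u + 1 + Φ 0 / deriv Φ 0 ≤ tildePhi Φ u := by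
  unfold tildePhi
  split_ifs with hu
  · have htangent := hconv.add_deriv_mul_sub_le (Set.mem_univ 0) (Set.mem_univ (1 - u)) hdiff
    rw [le_div_iff₀ hd0, add_mul, div_mul_cancel₀ _ hd0.ne']
    linarith
  · rfl

theorem bddBelow_range_Tone_objective (hnn : ∀ u, 0 ≤ Φ u) (hd0 : 0 ≤ deriv Φ 0) {t : ℝ}
    (ht : t ∈ Set.Icc (-1 : ℝ) 1) :
    BddBelow (Set.range fun u ↦ (1 - t) / 2 * tildePhi Φ (-u) + (1 + t) / 2 * tildePhi Φ u) := by
  refine ⟨0, ?_⟩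
  rintro _ ⟨u, rfl⟩
  have hl : 0 ≤ (1 - t) / 2 := by linarith [ht.2]
  have hr : 0 ≤ (1 + t) / 2 := by linarith [ht.1]
  exact add_nonneg (mul_nonneg hl (tildePhi_nonneg hnn hd0 _))
    (mul_nonneg hr (tildePhi_nonneg hnn hd0 _))

theorem le_Tone (hnn : ∀ u, 0 ≤ Φ u) (hd0 : 0 ≤ deriv Φ 0) {t : ℝ}
    (ht : t ∈ Set.Icc (-1 : ℝ) 1) : t ≤ Tone Φ t := by
  have hinf := ciInf_le (bddBelow_range_Tone_objective hnn hd0 ht) 1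
  rw [tildePhi_of_le_one (by norm_num), tildePhi_of_le_one le_rfl] at hinf
  rw [Tone, tildePhi_of_le_one zero_le_one]
  linarith

theorem Tone_zero (hconv : ConvexOn ℝ Set.univ Φ) (hdiff : DifferentiableAt ℝ Φ 0)
    (hd0 : 0 < deriv Φ 0) : Tone Φ 0 = 0 := by
  have hlow : ∀ u, tildePhi Φ 0 ≤ (1 - 0) / 2 * tildePhi Φ (-u) + (1 + 0) / 2 * tildePhi Φ u := by
    intro u
    have hu := linearCore_le_tildePhi hconv hdiff hd0 u
    have hnegu := linearCore_le_tildePhi hconv hdiff hd0 (-u)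
    rw [tildePhi_of_le_one zero_le_one]
    linarith
  have hinf : ⨅ u, ((1 - 0) / 2 * tildePhi Φ (-u) + (1 + 0) / 2 * tildePhi Φ u) = tildePhi Φ 0 :=
    le_antisymm ((ciInf_le ⟨_, Set.forall_mem_range.2 hlow⟩ 0).trans_eq (by norm_num; ring))
      (le_ciInf hlow)
  rw [Tone, hinf, sub_self]

end tildePhi

/-- `T_one(t) ≥ t` for all `t ∈ [0, 1]`, and `T_one(0) = 0`. -/
theorem Tone_linear_lower_bound (Φ : ℝ → ℝ)
    (hconv : ConvexOn ℝ Set.univ Φ) (hdiff : Differentiable ℝ Φ)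
    (hnn : ∀ u, 0 ≤ Φ u) (hd0 : 0 < deriv Φ 0) :
    (∀ t ∈ Set.Icc (0 : ℝ) 1, t ≤ Tone Φ t) ∧ Tone Φ 0 = 0 :=
  ⟨fun _ ht ↦ le_Tone hnn hd0.le ⟨by linarith [ht.1], ht.2⟩, Tone_zero hconv (hdiff 0) hd0⟩
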